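/- For integers m ≥ 3, d_1 ≤ d_2 ≤ ... ≤ d_m and positive integers ε_1, ..., ε_{m-2}, set t = ε_1 + ... + ε_{m-2}, d = d_1 + d_2 + 1 − t, τ = d_1² + d_1d_2 + d_2² − t(d_1 + d_2) − Σ_{j=1}^{m-2} ε_j d_{j+2} + Σ_{1≤i<j≤m-2} ε_i ε_j, and τ_max = (d−1)² − d_1(d − d_1 − 1). Then τ_max − τ = 2 if and only if m = 3, ε_1 = 1 and d_3 = d_2 + 1. -/

import Mathlib

/-!
Expanding `t² = ∑ ε_j² + 2 ∑_{i<j} ε_i ε_j`, the difference `τ_max − τ` becomes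
`∑_j ε_j (ε_j + d_{j+2} − d_2) + ∑_{i<j} ε_i ε_j`. Every term of the first sum is at least `1`,
and the cross term is positive as soon as there are two exponents `ε`, so the difference is `2`
only when `m = 3`; then `ε_1 (ε_1 + d_3 − d_2) = 2` forces `ε_1 = 1` and `d_3 = d_2 + 1`.
-/

open Finset

def pairSum {R : Type*} [CommSemiring R] (f : ℕ → R) (n : ℕ) : R :=
  ∑ i ∈ Icc 1 n, ∑ j ∈ Icc (i + 1) n, f i * f j

section pairSum

variable {R : Type*} (f : ℕ → R) (n : ℕ)

theorem pairSum_succ [CommSemiring R] :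
    pairSum f (n + 1) = pairSum f n + (∑ i ∈ Icc 1 n, f i) * f (n + 1) := by
  have last : ∑ j ∈ Icc (n + 1 + 1) (n + 1), f (n + 1) * f j = 0 := by simp
  rw [pairSum, sum_Icc_succ_top (by omega), last, add_zero, pairSum, sum_mul,
    ← sum_add_distrib]
  refine sum_congr rfl fun i hi => ?_
  rw [sum_Icc_succ_top (by grind)]

theorem sq_sum_Icc [CommSemiring R] :
    (∑ i ∈ Icc 1 n, f i) ^ 2 = ∑ i ∈ Icc 1 n, f i ^ 2 + 2 * pairSum f n := by
  induction n with
  | zero => simp [pairSum]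
  | succ n ih =>
    rw [sum_Icc_succ_top (by omega), sum_Icc_succ_top (by omega), pairSum_succ, add_sq, ih]
    ring

theorem mul_le_pairSum [CommSemiring R] [PartialOrder R] [IsOrderedRing R]
    (hf : ∀ i ∈ Icc 1 n, 0 ≤ f i) (hn : 2 ≤ n) : f 1 * f 2 ≤ pairSum f n := by
  have h1 : 1 ∈ Icc 1 n := mem_Icc.2 ⟨le_rfl, by omega⟩
  calc f 1 * f 2 ≤ ∑ j ∈ Icc (1 + 1) n, f 1 * f j :=
        single_le_sum (f := fun j => f 1 * f j)
          (fun j hj => mul_nonneg (hf 1 h1) (hf j (by grind)))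
          (mem_Icc.2 ⟨le_rfl, hn⟩)
    _ ≤ pairSum f n :=
        single_le_sum (f := fun i => ∑ j ∈ Icc (i + 1) n, f i * f j)
          (fun i hi => sum_nonneg fun j hj => mul_nonneg (hf i hi) (hf j (by grind))) h1

end pairSum

theorem Int.mul_add_eq_two_iff {e δ : ℤ} (he : 1 ≤ e) (hδ : 0 ≤ δ) :
    e * (e + δ) = 2 ↔ e = 1 ∧ δ = 1 := by
  constructor
  · intro h
    have he1 : e = 1 := by nlinarith
    subst he1
    exact ⟨rfl, by linarith⟩
  · rintro ⟨rfl, rfl⟩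
    rfl

theorem tauMax_sub_tau_eq {d ε : ℕ → ℤ} {n : ℕ} {t : ℤ} (ht : t = ∑ j ∈ Icc 1 n, ε j) :
    (d 1 + d 2 - t) ^ 2 - d 1 * (d 2 - t)
      - (d 1 ^ 2 + d 1 * d 2 + d 2 ^ 2 - t * (d 1 + d 2)
        - ∑ j ∈ Icc 1 n, ε j * d (j + 2) + pairSum ε n)
      = ∑ j ∈ Icc 1 n, ε j * (ε j + (d (j + 2) - d 2)) + pairSum ε n := by
  simp only [mul_add, mul_sub, sum_add_distrib, sum_sub_distrib, ← sum_mul, ← sq]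
  subst ht
  linear_combination sq_sum_Icc ε n

theorem sum_mul_add_add_pairSum_eq_two_iff {ε δ : ℕ → ℤ} {n : ℕ} (hn : 1 ≤ n)
    (hε : ∀ j ∈ Icc 1 n, 1 ≤ ε j) (hδ : ∀ j ∈ Icc 1 n, 0 ≤ δ j) :
    ∑ j ∈ Icc 1 n, ε j * (ε j + δ j) + pairSum ε n = 2 ↔ n = 1 ∧ ε 1 = 1 ∧ δ 1 = 1 := by
  obtain rfl | hn2 : n = 1 ∨ 2 ≤ n := by omega
  · simp [pairSum, Int.mul_add_eq_two_iff (hε 1 (by simp)) (hδ 1 (by simp))]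
  · have hsum : (n : ℤ) ≤ ∑ j ∈ Icc 1 n, ε j * (ε j + δ j) := by
      simpa using card_nsmul_le_sum (Icc 1 n) (fun j => ε j * (ε j + δ j)) 1 fun j hj => by
        nlinarith [hε j hj, hδ j hj]
    have hpair : 1 ≤ pairSum ε n := by
      have := mul_le_pairSum ε n (fun j hj => by linarith [hε j hj]) hn2
      nlinarith [hε 1 (mem_Icc.2 ⟨le_rfl, hn⟩), hε 2 (mem_Icc.2 ⟨by omega, hn2⟩)]
    constructor
    · intro h; omega
    · rintro ⟨rfl, -⟩; omega

/-- Corollary 5.4 (2) (minimal plus-one generated curves): `τ_max − τ = 2`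
iff `m = 3`, `ε₁ = 1` and `d₃ = d₂ + 1`. -/
theorem mpog_characterization (m : ℕ) (hm : 3 ≤ m) (d ε : ℕ → ℤ)
    (hsort : ∀ i ∈ Icc 1 m, ∀ j ∈ Icc 1 m, i ≤ j → d i ≤ d j)
    (hε : ∀ j ∈ Icc 1 (m - 2), 0 < ε j)
    (t : ℤ) (ht : t = ∑ j ∈ Icc 1 (m - 2), ε j)
    (D : ℤ) (hD : D = d 1 + d 2 + 1 - t)
    (τ : ℤ)
    (hτ : τ = (d 1) ^ 2 + d 1 * d 2 + (d 2) ^ 2 - t * (d 1 + d 2)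
        - ∑ j ∈ Icc 1 (m - 2), ε j * d (j + 2)
        + ∑ i ∈ Icc 1 (m - 2), ∑ j ∈ Icc (i + 1) (m - 2), ε i * ε j)
    (τmax : ℤ) (hτmax : τmax = (D - 1) ^ 2 - d 1 * (D - d 1 - 1)) :
    τmax - τ = 2 ↔ m = 3 ∧ ε 1 = 1 ∧ d 3 = d 2 + 1 := by
  have hgap : τmax - τ = ∑ j ∈ Icc 1 (m - 2), ε j * (ε j + (d (j + 2) - d 2))
      + pairSum ε (m - 2) := by
    rw [← tauMax_sub_tau_eq ht, hτmax, hD, hτ, pairSum]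
    ring
  have hδ : ∀ j ∈ Icc 1 (m - 2), 0 ≤ d (j + 2) - d 2 := fun j hj =>
    sub_nonneg.2 (hsort 2 (mem_Icc.2 ⟨by omega, by omega⟩) (j + 2)
      (by simp only [mem_Icc] at hj ⊢; omega) (by omega))
  rw [hgap, sum_mul_add_add_pairSum_eq_two_iff (by omega) hε hδ]
  exact and_congr (by omega) (and_congr Iff.rfl sub_eq_iff_eq_add')
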